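/- Let k, l, s, n be integers with 1 ≤ k ≤ s, 1 ≤ l ≤ s, s ≤ n and s ≥ 2l. Then ∑_{j=0}^{k−1} (−1)^{k+j+1} · C(n+2k−s−1, k−j−1) · C(n−s+j, n−s) · C(n+j, 2l−1) = (−1)^{k+1} · ∑_{i=0}^{min(k−1, 2l−1)} C(n−s+i, i) · C(s−1−i, 2l−1−i) · C(2k−i−2, k−1) + ∑_{i=2k−1}^{2l−1} C(n−s+i, i) · C(s−1−i, 2l−1−i) · C(i−k, k−1). -/

import Mathlib

/-!
Write `m = n - s` and `r = 2l - 1 < s`. The upper Chu–Vandermonde identity expands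
`C(n+j, r) = ∑ᵢ C(m+j+i, i) C(s-1-i, r-i)`; after `C(m+j, j) C(m+j+i, i) = C(m+i, i) C(m+i+j, j)`
and exchanging the sums, the inner alternating sum over `j` is the coefficient of `x^(k-1)` in
`(1+x)^(m+2k-1) (1+x)^(-(m+i+1)) = (1+x)^(2k-2-i)`, the generalized binomial coefficient
`C(2k-2-i, k-1)`. For `i ≤ 2k-2` this is an ordinary binomial coefficient, which vanishes unless
`i ≤ k-1`; for `i ≥ 2k-1` the upper index is negative and it equals `(-1)^(k-1) C(i-k, k-1)`.
Both Vandermonde identities with negative upper index are instances of Chu–Vandermonde in the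
binomial ring `ℤ`.
-/

open Finset

theorem choose_add_mul_choose_add_add_comm (m i j : ℕ) :
    (m + j).choose j * (m + j + i).choose i = (m + i).choose i * (m + i + j).choose j := by
  have h := Nat.choose_mul (n := m + i + j) (k := m + j) (s := j) (by omega)
  simp only [Nat.add_sub_cancel] at h
  rw [← Nat.choose_symm_add (a := m) (b := i), ← Nat.choose_symm_add (a := m + j) (b := i),
    show m + j + i = m + i + j by ring, mul_comm, h, mul_comm]

section BinomialRing

variable {R : Type*} [CommRing R] [BinomialRing R]

theorem Ring.choose_neg_natCast_add_one (p j : ℕ) :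
    Ring.choose (-((p : R) + 1)) j = (-1) ^ j * ((p + j).choose j : R) := by
  rw [Ring.choose_neg, Units.smul_def, Int.coe_negOnePow_natCast, zsmul_eq_mul,
    show (p : R) + 1 + j - 1 = ((p + j : ℕ) : R) by push_cast; ring, Ring.choose_natCast]
  push_cast; ring

theorem Ring.choose_natCast_sub_natCast_of_le {x y : ℕ} (h : y ≤ x) (a : ℕ) :
    Ring.choose ((x : R) - y) a = ((x - y).choose a : R) := by
  rw [← Nat.cast_sub h, Ring.choose_natCast]

theorem Ring.choose_natCast_sub_natCast_of_lt {x y : ℕ} (h : x < y) (a : ℕ) :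
    Ring.choose ((x : R) - y) a = (-1) ^ a * ((y - x - 1 + a).choose a : R) := by
  rw [show (x : R) - y = -(((y - x - 1 : ℕ) : R) + 1) by
      rw [Nat.sub_sub, Nat.cast_sub (by omega)]; push_cast; ring,
    Ring.choose_neg_natCast_add_one]

theorem Ring.add_choose_eq_sum_range (r s : R) (a : ℕ) :
    Ring.choose (r + s) a = ∑ i ∈ range (a + 1), Ring.choose r i * Ring.choose s (a - i) := by
  rw [Ring.add_choose_eq a (Commute.all r s), Nat.sum_antidiagonal_eq_sum_range_succ
    (fun i j => Ring.choose r i * Ring.choose s j)]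

theorem sum_range_neg_one_pow_mul_choose_add_mul_choose (p N a : ℕ) :
    ∑ j ∈ range (a + 1), (-1) ^ j * ((p + j).choose j : R) * (N.choose (a - j) : R) =
      Ring.choose ((N : R) - (p + 1)) a := by
  rw [sub_eq_neg_add, Ring.add_choose_eq_sum_range]
  simp only [Ring.choose_neg_natCast_add_one, Ring.choose_natCast]

theorem sum_range_choose_add_mul_choose_add (p q a : ℕ) :
    ∑ i ∈ range (a + 1), (p + i).choose i * (q + (a - i)).choose (a - i) =
      (p + q + 1 + a).choose a := by
  have key := Ring.add_choose_eq_sum_range (-((p : ℤ) + 1)) (-((q : ℤ) + 1)) a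
  rw [show -((p : ℤ) + 1) + -((q : ℤ) + 1) = -(((p + q + 1 : ℕ) : ℤ) + 1) by push_cast; ring]
    at key
  simp only [Ring.choose_neg_natCast_add_one] at key
  have hsign : ∀ i ∈ range (a + 1), (-1 : ℤ) ^ i * ((p + i).choose i : ℤ) *
      ((-1) ^ (a - i) * ((q + (a - i)).choose (a - i) : ℤ)) =
      (-1) ^ a * (((p + i).choose i * (q + (a - i)).choose (a - i) : ℕ) : ℤ) := by
    intro i hi
    rw [← pow_sub_mul_pow (-1 : ℤ) (Nat.le_of_lt_succ (mem_range.mp hi))]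
    push_cast; ring
  rw [sum_congr rfl hsign, ← mul_sum] at key
  exact_mod_cast (mul_left_cancel₀ (pow_ne_zero a (by norm_num)) key).symm

theorem sum_range_alternating_choose_mul_choose_mul_choose (m N a s r : ℕ) (hrs : r < s) :
    ∑ j ∈ range (a + 1), (-1) ^ j * ((m + N).choose (a - j) : R) * ((m + j).choose j : R) *
        ((m + s + j).choose r : R) =
      ∑ i ∈ range (r + 1), ((m + i).choose i : R) * ((s - 1 - i).choose (r - i) : R) *
        Ring.choose ((N : R) - (i + 1)) a := by
  have upper (j : ℕ) : ((m + s + j).choose r : R) = ∑ i ∈ range (r + 1),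
      ((m + j + i).choose i : R) * ((s - 1 - i).choose (r - i) : R) := by
    rw [show m + s + j = m + j + (s - 1 - r) + 1 + r by omega,
      ← sum_range_choose_add_mul_choose_add]
    push_cast
    refine sum_congr rfl fun i hi => ?_
    rw [show s - 1 - r + (r - i) = s - 1 - i by have := mem_range.mp hi; omega]
  simp only [upper, mul_sum]
  rw [sum_comm]
  refine sum_congr rfl fun i _ => ?_
  rw [show (N : R) - (i + 1) = ((m + N : ℕ) : R) - ((m + i : ℕ) + 1) by push_cast; ring,
    ← sum_range_neg_one_pow_mul_choose_add_mul_choose, mul_sum]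
  refine sum_congr rfl fun j _ => ?_
  have := congrArg (Nat.cast (R := R)) (choose_add_mul_choose_add_add_comm m i j)
  push_cast at this
  linear_combination
    ((-1) ^ j * ((m + N).choose (a - j) : R) * ((s - 1 - i).choose (r - i) : R)) * this

theorem sum_range_mul_ringChoose_natCast_sub (g : ℕ → R) (N a r : ℕ) :
    ∑ i ∈ range (r + 1), g i * Ring.choose ((N : R) - (i + 1)) a =
      ∑ i ∈ range (min N (r + 1)), g i * ((N - (i + 1)).choose a : R) +
        (-1) ^ a * ∑ i ∈ Icc N r, g i * ((i - N + a).choose a : R) := by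
  rw [← sum_filter_add_sum_filter_not (range (r + 1)) (· < N),
    show (range (r + 1)).filter (· < N) = range (min N (r + 1)) by ext; simp; omega,
    show (range (r + 1)).filter (¬ · < N) = Icc N r by ext; simp; omega, mul_sum]
  congr 1 <;> refine sum_congr rfl fun i hi => ?_ <;> simp only [mem_range, mem_Icc] at hi <;>
    rw [← Nat.cast_succ]
  · rw [Ring.choose_natCast_sub_natCast_of_le (by omega)]
  · rw [Ring.choose_natCast_sub_natCast_of_lt (by omega), show i + 1 - N - 1 = i - N by omega]
    ring

theorem sum_range_mul_ringChoose_two_mul_sub_one_sub (g : ℕ → R) {k : ℕ} (hk : 1 ≤ k) (r : ℕ) :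
    ∑ i ∈ range (r + 1), g i * Ring.choose (((2 * k - 1 : ℕ) : R) - (i + 1)) (k - 1) =
      ∑ i ∈ range (min (k - 1) r + 1), g i * ((2 * k - i - 2).choose (k - 1) : R) +
        (-1) ^ (k - 1) * ∑ i ∈ Icc (2 * k - 1) r, g i * ((i - k).choose (k - 1) : R) := by
  rw [sum_range_mul_ringChoose_natCast_sub]
  congr 1
  · refine (sum_subset (range_subset_range.mpr (by omega)) fun i hi hi' => ?_).symm.trans
      (sum_congr rfl fun i _ => by rw [show 2 * k - 1 - (i + 1) = 2 * k - i - 2 by omega])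
    simp only [mem_range] at hi hi'
    rw [Nat.choose_eq_zero_of_lt (by omega), Nat.cast_zero, mul_zero]
  · refine congrArg _ (sum_congr rfl fun i hi => ?_)
    rw [show i - (2 * k - 1) + (k - 1) = i - k by simp only [mem_Icc] at hi; omega]

end BinomialRing

theorem Dkl_nonalternating_case1_general (k l s n : ℕ)
    (hk1 : 1 ≤ k) (hl1 : 1 ≤ l)
    (hsn : s ≤ n) (hs2l : 2 * l ≤ s) :
    ∑ j ∈ Finset.range k,
      (-1 : ℤ) ^ (k + j + 1) * (Nat.choose (n + 2 * k - s - 1) (k - j - 1) : ℤ) *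
        (Nat.choose (n - s + j) (n - s) : ℤ) * (Nat.choose (n + j) (2 * l - 1) : ℤ)
      = (-1 : ℤ) ^ (k + 1) *
          ∑ i ∈ Finset.range (min (k - 1) (2 * l - 1) + 1),
            (Nat.choose (n - s + i) i : ℤ) * (Nat.choose (s - 1 - i) (2 * l - 1 - i) : ℤ) *
              (Nat.choose (2 * k - i - 2) (k - 1) : ℤ)
        + ∑ i ∈ Finset.Icc (2 * k - 1) (2 * l - 1),
            (Nat.choose (n - s + i) i : ℤ) * (Nat.choose (s - 1 - i) (2 * l - 1 - i) : ℤ) *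
              (Nat.choose (i - k) (k - 1) : ℤ) := by
  obtain ⟨m, rfl⟩ : ∃ m, n = m + s := ⟨n - s, by omega⟩
  have hsign : (-1 : ℤ) ^ (k + 1) * (-1) ^ (k - 1) = 1 := by
    rw [← pow_add, show k + 1 + (k - 1) = 2 * k by omega, pow_mul, neg_one_sq, one_pow]
  calc _ = (-1) ^ (k + 1) * ∑ j ∈ range (k - 1 + 1), (-1) ^ j *
        ((m + (2 * k - 1)).choose (k - 1 - j) : ℤ) * ((m + j).choose j : ℤ) *
          ((m + s + j).choose (2 * l - 1) : ℤ) := by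
        rw [Nat.sub_add_cancel hk1, mul_sum]
        refine sum_congr rfl fun j _ => ?_
        rw [show m + s + 2 * k - s - 1 = m + (2 * k - 1) by omega, Nat.add_sub_cancel,
          show k - j - 1 = k - 1 - j by omega, Nat.choose_symm_add,
          show k + j + 1 = k + 1 + j by ring, pow_add]
        ring
    _ = _ := by
        rw [sum_range_alternating_choose_mul_choose_mul_choose _ _ _ _ _ (by omega),
          sum_range_mul_ringChoose_two_mul_sub_one_sub _ hk1, Nat.add_sub_cancel]
        linear_combination (∑ i ∈ Icc (2 * k - 1) (2 * l - 1), ((m + i).choose i : ℤ) *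
          ((s - 1 - i).choose (2 * l - 1 - i) : ℤ) * ((i - k).choose (k - 1) : ℤ)) * hsign

/-- Non-alternating form of the sum `D_{k,l}` (case `s ≥ 2l`):
`∑_{j=0}^{k−1} (−1)^{k+j+1} C(n+2k−s−1,k−j−1) C(n−s+j,n−s) C(n+j,2l−1)
  = (−1)^{k+1} ∑_{i=0}^{min(k−1,2l−1)} C(n−s+i,i) C(s−1−i,2l−1−i) C(2k−i−2,k−1)
    + ∑_{i=2k−1}^{2l−1} C(n−s+i,i) C(s−1−i,2l−1−i) C(i−k,k−1)`. -/
theorem Dkl_nonalternating_case1 (k l s n : ℕ)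
    (hk1 : 1 ≤ k) (hks : k ≤ s) (hl1 : 1 ≤ l) (hls : l ≤ s)
    (hsn : s ≤ n) (hs2l : 2 * l ≤ s) :
    ∑ j ∈ Finset.range k,
      (-1 : ℤ) ^ (k + j + 1) * (Nat.choose (n + 2 * k - s - 1) (k - j - 1) : ℤ) *
        (Nat.choose (n - s + j) (n - s) : ℤ) * (Nat.choose (n + j) (2 * l - 1) : ℤ)
      = (-1 : ℤ) ^ (k + 1) *
          ∑ i ∈ Finset.range (min (k - 1) (2 * l - 1) + 1),
            (Nat.choose (n - s + i) i : ℤ) * (Nat.choose (s - 1 - i) (2 * l - 1 - i) : ℤ) *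
              (Nat.choose (2 * k - i - 2) (k - 1) : ℤ)
        + ∑ i ∈ Finset.Icc (2 * k - 1) (2 * l - 1),
            (Nat.choose (n - s + i) i : ℤ) * (Nat.choose (s - 1 - i) (2 * l - 1 - i) : ℤ) *
              (Nat.choose (i - k) (k - 1) : ℤ) :=
  Dkl_nonalternating_case1_general k l s n hk1 hl1 hsn hs2l
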